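/- Let H be a Hopf algebra and J a normalized twist for H with inverse J⁻¹ = Σ J⁻⁽¹⁾ ⊗ J⁻⁽²⁾. Then Σ J⁻⁽¹⁾·S(J⁻⁽²⁾₍₁₎) ⊗ S(J⁻⁽²⁾₍₂₎) = (Q_J⁻¹ ⊗ 1)·(S ⊗ S)(J), where Q_J = Σ S(J⁽¹⁾)·J⁽²⁾. -/

import Mathlib

open TensorProduct

noncomputable section
variable (K B : Type*) [Field K] [Ring B] [Bialgebra K B]

/-- `ε ⊗ id : B ⊗ B → B`. -/
def epsId : B ⊗[K] B →ₐ[K] B :=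
  (Algebra.TensorProduct.lid K B).toAlgHom.comp
    (Algebra.TensorProduct.map (Bialgebra.counitAlgHom K B) (AlgHom.id K B))

/-- `id ⊗ ε : B ⊗ B → B`. -/
def idEps : B ⊗[K] B →ₐ[K] B :=
  (Algebra.TensorProduct.rid K K B).toAlgHom.comp
    (Algebra.TensorProduct.map (AlgHom.id K B) (Bialgebra.counitAlgHom K B))

/-- `Δ ⊗ id`, landing in `B ⊗ (B ⊗ B)`. -/
def comulId : B ⊗[K] B →ₐ[K] B ⊗[K] (B ⊗[K] B) :=
  (Algebra.TensorProduct.assoc K K K B B B).toAlgHom.comp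
    (Algebra.TensorProduct.map (Bialgebra.comulAlgHom K B) (AlgHom.id K B))

/-- `id ⊗ Δ`, landing in `B ⊗ (B ⊗ B)`. -/
def idComul : B ⊗[K] B →ₐ[K] B ⊗[K] (B ⊗[K] B) :=
  Algebra.TensorProduct.map (AlgHom.id K B) (Bialgebra.comulAlgHom K B)

/-- The cocycle condition `(Δ ⊗ id)(J)·(J ⊗ 1) = (id ⊗ Δ)(J)·(1 ⊗ J)` for a twist. -/
def IsTwist (J : B ⊗[K] B) : Prop :=
  comulId K B J * (Algebra.TensorProduct.assoc K K K B B B (J ⊗ₜ 1)) =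
    idComul K B J * ((1 : B) ⊗ₜ J)

/-- Normalization `(ε ⊗ id)(J) = (id ⊗ ε)(J) = 1`. -/
def IsNormalized (J : B ⊗[K] B) : Prop :=
  epsId K B J = 1 ∧ idEps K B J = 1

/-- The twisted comultiplication `a ↦ J⁻¹·Δ(a)·J` (with `J'` playing the role of `J⁻¹`). -/
def comulJ (J' J : B ⊗[K] B) : B →ₗ[K] B ⊗[K] B :=
  LinearMap.mulLeft K J' ∘ₗ LinearMap.mulRight K J ∘ₗ Coalgebra.comul

end

noncomputable section
variable (K B : Type*) [Field K] [Ring B] [HopfAlgebra K B]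

/-- The antipode as a linear map. -/
def anti : B →ₗ[K] B := HopfAlgebra.antipode (R := K) (A := B)

/-- `Q_J = Σ S(J⁽¹⁾)·J⁽²⁾`. -/
def QJ (J : B ⊗[K] B) : B := LinearMap.mul' K B ((anti K B).rTensor B J)

/-- `Σ J'⁽¹⁾·S(J'⁽²⁾)`; for `J' = J⁻¹` this is the inverse of `Q_J`. -/
def QJinv (J' : B ⊗[K] B) : B := LinearMap.mul' K B ((anti K B).lTensor B J')

/-- The twisted antipode `a ↦ Q_J⁻¹·S(a)·Q_J` (with `J'` playing the role of `J⁻¹`). -/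
def antiJ (J' J : B ⊗[K] B) : B →ₗ[K] B :=
  LinearMap.mulLeft K (QJinv K B J') ∘ₗ LinearMap.mulRight K (QJ K B J) ∘ₗ anti K B

end

/-! Write `Ψ(a ⊗ y ⊗ z) = a·S(y) ⊗ S(z)`, so that the left-hand side is `Ψ((id ⊗ Δ)(J⁻¹))`.
Since `S` is anti-multiplicative, `Ψ(x)·(S ⊗ S)(v) = Ψ((1 ⊗ v)·x)`. Multiplying the left-hand side
by `(S ⊗ S)(J⁻¹) = ((S ⊗ S)(J))⁻¹` therefore gives `Ψ((1 ⊗ J⁻¹)·(id ⊗ Δ)(J⁻¹))`, which by the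
inverted cocycle condition is `Ψ((J⁻¹ ⊗ 1)·(Δ ⊗ id)(J⁻¹))`. There the antipode axiom
`Σ a₍₁₎S(a₍₂₎) = ε(a)` collapses the first two legs, leaving `Q_J⁻¹ ⊗ S((ε ⊗ id)(J⁻¹)) = Q_J⁻¹ ⊗ 1`. -/

open Coalgebra HopfAlgebra

section MonoidHom

variable {M N F : Type*} [Monoid M] [Monoid N] [FunLike F M N] [MonoidHomClass F M N]

theorem map_mul_map_rev_of_mul_eq_one {x y : M} (hxy : x * y = 1) (hyx : y * x = 1)
    {f g p q : F} (h : f x * g x = p x * q x) : g y * f y = q y * p y := by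
  refine left_inv_eq_right_inv (a := f x * g x) ?_ ?_
  · rw [mul_assoc, ← mul_assoc (f y), ← map_mul, hyx, map_one, one_mul, ← map_mul, hyx, map_one]
  · rw [h, mul_assoc, ← mul_assoc (q x), ← map_mul, hxy, map_one, one_mul, ← map_mul, hxy,
      map_one]

end MonoidHom

variable {K H : Type*} [Field K] [Ring H] [HopfAlgebra K H]

theorem IsTwist.inv_cocycle {J J' : H ⊗[K] H} (hc : IsTwist K H J)
    (hJ : J * J' = 1) (hJ' : J' * J = 1) :
    ((1 : H) ⊗ₜ J') * idComul K H J' =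
      Algebra.TensorProduct.assoc K K K H H H (J' ⊗ₜ 1) * comulId K H J' :=
  (map_mul_map_rev_of_mul_eq_one hJ hJ' (f := comulId K H)
    (g := (Algebra.TensorProduct.assoc K K K H H H).toAlgHom.comp
      Algebra.TensorProduct.includeLeft)
    (p := idComul K H) (q := Algebra.TensorProduct.includeRight) hc).symm

theorem comulId_apply (w : H ⊗[K] H) :
    comulId K H w = Algebra.TensorProduct.assoc K K K H H H
      (Algebra.TensorProduct.map (Bialgebra.comulAlgHom K H) (AlgHom.id K H) w) := rfl

@[simp] theorem anti_apply (x : H) : anti K H x = antipode K x := rfl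

theorem map_anti_anti_one : TensorProduct.map (anti K H) (anti K H) 1 = 1 := by
  simp [Algebra.TensorProduct.one_def]

theorem map_anti_anti_mul (u v : H ⊗[K] H) :
    TensorProduct.map (anti K H) (anti K H) (u * v) =
      TensorProduct.map (anti K H) (anti K H) v * TensorProduct.map (anti K H) (anti K H) u := by
  induction u using TensorProduct.induction_on with
  | zero => simp
  | add x y hx hy => simp [add_mul, mul_add, hx, hy]
  | tmul a b =>
    induction v using TensorProduct.induction_on with
    | zero => simp
    | add x y hx hy => simp [add_mul, mul_add, hx, hy]
    | tmul c d => simp [antipode_mul_antidistrib]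

variable (K H) in
def mulAntipodeRight : H ⊗[K] H →ₗ[K] H := LinearMap.mul' K H ∘ₗ (anti K H).lTensor H

@[simp] theorem mulAntipodeRight_tmul (x y : H) :
    mulAntipodeRight K H (x ⊗ₜ y) = x * antipode K y := rfl

theorem QJinv_eq_mulAntipodeRight (u : H ⊗[K] H) : QJinv K H u = mulAntipodeRight K H u := rfl

theorem mulAntipodeRight_mul_comul (u : H ⊗[K] H) (g : H) :
    mulAntipodeRight K H (u * comul (R := K) g) = counit (R := K) g • mulAntipodeRight K H u := by
  induction u using TensorProduct.induction_on with
  | zero => simp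
  | add x y hx hy => simp [add_mul, hx, hy, smul_add]
  | tmul y z =>
    rw [← (ℛ K g).eq, Finset.mul_sum, map_sum]
    simp only [Algebra.TensorProduct.tmul_mul_tmul, mulAntipodeRight_tmul,
      antipode_mul_antidistrib, mul_assoc, ← Finset.mul_sum]
    simp only [← mul_assoc, ← Finset.sum_mul, sum_mul_antipode_eq_smul]
    simp

variable (K H) in
def mulAntipodeTensor : H ⊗[K] (H ⊗[K] H) →ₗ[K] H ⊗[K] H :=
  TensorProduct.map (LinearMap.mul' K H) LinearMap.id ∘ₗ
    (Algebra.TensorProduct.assoc K K K H H H).symm.toLinearMap ∘ₗ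
    LinearMap.lTensor H (TensorProduct.map (anti K H) (anti K H))

@[simp] theorem mulAntipodeTensor_tmul (a y z : H) :
    mulAntipodeTensor K H (a ⊗ₜ (y ⊗ₜ z)) = (a * antipode K y) ⊗ₜ antipode K z := rfl

theorem mulAntipodeTensor_assoc (z : (H ⊗[K] H) ⊗[K] H) :
    mulAntipodeTensor K H (Algebra.TensorProduct.assoc K K K H H H z) =
      TensorProduct.map (mulAntipodeRight K H) (anti K H) z := by
  have : mulAntipodeTensor K H ∘ₗ (Algebra.TensorProduct.assoc K K K H H H).toLinearMap =
      TensorProduct.map (mulAntipodeRight K H) (anti K H) :=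
    TensorProduct.ext_threefold fun _ _ _ => rfl
  exact LinearMap.congr_fun this z

theorem mulAntipodeTensor_mul_map_anti_anti (x : H ⊗[K] (H ⊗[K] H)) (v : H ⊗[K] H) :
    mulAntipodeTensor K H x * TensorProduct.map (anti K H) (anti K H) v =
      mulAntipodeTensor K H (((1 : H) ⊗ₜ v) * x) := by
  induction x using TensorProduct.induction_on with
  | zero => simp
  | add x y hx hy => simp [add_mul, mul_add, hx, hy]
  | tmul a w =>
    induction w using TensorProduct.induction_on with
    | zero => simp
    | add x y hx hy => simp_all [TensorProduct.tmul_add, add_mul, mul_add]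
    | tmul y z =>
      induction v using TensorProduct.induction_on with
      | zero => simp
      | add p q hp hq => simp_all [TensorProduct.tmul_add, add_mul, mul_add]
      | tmul c d => simp [antipode_mul_antidistrib, mul_assoc]

theorem map_mulAntipodeRight_anti_tmul_one_mul (u w : H ⊗[K] H) :
    TensorProduct.map (mulAntipodeRight K H) (anti K H)
      ((u ⊗ₜ (1 : H)) *
        Algebra.TensorProduct.map (Bialgebra.comulAlgHom K H) (AlgHom.id K H) w) =
      QJinv K H u ⊗ₜ anti K H (epsId K H w) := by
  induction w using TensorProduct.induction_on with
  | zero => simp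
  | add x y hx hy => simp only [map_add, mul_add, hx, hy, TensorProduct.tmul_add]
  | tmul g h =>
    induction u using TensorProduct.induction_on with
    | zero => simp [QJinv_eq_mulAntipodeRight]
    | add x y hx hy => simp_all [TensorProduct.add_tmul, add_mul, QJinv_eq_mulAntipodeRight]
    | tmul e f =>
      simp [QJinv_eq_mulAntipodeRight, mulAntipodeRight_mul_comul, epsId,
        TensorProduct.smul_tmul']

theorem twist_lemma_two (J J' : H ⊗[K] H)
    (hJ : J * J' = 1) (hJ' : J' * J = 1) (hc : IsTwist K H J) (hn : IsNormalized K H J) :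
    TensorProduct.map (LinearMap.mul' K H) LinearMap.id
        ((Algebra.TensorProduct.assoc K K K H H H).symm
          (LinearMap.lTensor H (TensorProduct.map (anti K H) (anti K H)) (idComul K H J'))) =
      (QJinv K H J' ⊗ₜ 1) * TensorProduct.map (anti K H) (anti K H) J := by
  change mulAntipodeTensor K H (idComul K H J') = _
  set T := TensorProduct.map (anti K H) (anti K H)
  have hT : T J' * T J = 1 := by rw [← map_anti_anti_mul, hJ, map_anti_anti_one]
  have hε : epsId K H J' = 1 := by simpa [hn.1] using congrArg (epsId K H) hJ
  have key : mulAntipodeTensor K H (idComul K H J') * T J' = QJinv K H J' ⊗ₜ 1 := by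
    rw [mulAntipodeTensor_mul_map_anti_anti, hc.inv_cocycle hJ hJ', comulId_apply, ← map_mul,
      mulAntipodeTensor_assoc, map_mulAntipodeRight_anti_tmul_one_mul, hε, anti_apply,
      antipode_one]
  calc _ = mulAntipodeTensor K H (idComul K H J') * (T J' * T J) := by rw [hT, mul_one]
    _ = _ := by rw [← mul_assoc, key]
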